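/- arXiv:2403.19928 — 2 statements merged into one kernel-verified Lean document; each statement's English description precedes it below -/
import Mathlib

section
/- For q, k ∈ R^d, exp(⟨q,k⟩) = E_{ω ∼ N(0, I_d)}[ exp(⟨ω,q⟩ - ||q||²/2) · exp(⟨ω,k⟩ - ||k||²/2) ], where the expectation is over ω drawn from the standard d-dimensional Gaussian. -/
open Real MeasureTheory

/-- The standard Gaussian measure `N(0, I_d)` on `ℝ^d`, given by its density
`(2π)^{-d/2} exp(-‖w‖²/2)` with respect to the Lebesgue measure. -/
noncomputable def stdGaussian (d : ℕ) : Measure (EuclideanSpace ℝ (Fin d)) :=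
  volume.withDensity fun w =>
    ENNReal.ofReal ((2 * π) ^ (-(d : ℝ) / 2) * Real.exp (-‖w‖ ^ 2 / 2))

lemma rexp_gaussian_mgf (d : ℕ) (v : EuclideanSpace ℝ (Fin d)) :
    ∫ w : EuclideanSpace ℝ (Fin d), Real.exp (-‖w‖ ^ 2 / 2 + (inner ℝ v w : ℝ)) =
      (2 * π) ^ ((d : ℝ) / 2) * Real.exp (‖v‖ ^ 2 / 2) := by
  have h := GaussianFourier.integral_cexp_neg_mul_sq_norm_add (V := EuclideanSpace ℝ (Fin d))
    (b := (1/2 : ℂ)) (by norm_num) 1 v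
  rw [← Complex.ofReal_inj]
  have hL : (((∫ w : EuclideanSpace ℝ (Fin d),
      Real.exp (-‖w‖ ^ 2 / 2 + (inner ℝ v w : ℝ))) : ℝ) : ℂ)
      = ∫ w : EuclideanSpace ℝ (Fin d),
        Complex.exp (-(1/2 : ℂ) * (‖w‖ : ℂ) ^ 2 + 1 * ((inner ℝ v w : ℝ) : ℂ)) := by
    have hpt : ∀ w : EuclideanSpace ℝ (Fin d),
        Complex.exp (-(1/2 : ℂ) * (‖w‖ : ℂ) ^ 2 + 1 * ((inner ℝ v w : ℝ) : ℂ))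
          = ((Real.exp (-‖w‖ ^ 2 / 2 + (inner ℝ v w : ℝ)) : ℝ) : ℂ) := by
      intro w
      rw [Complex.ofReal_exp]
      congr 1
      push_cast
      ring
    simp only [hpt]
    exact (integral_ofReal (𝕜 := ℂ)).symm
  rw [hL, h, finrank_euclideanSpace_fin]
  rw [Complex.ofReal_mul, Complex.ofReal_exp]
  congr 1
  · rw [Complex.ofReal_cpow (by positivity)]
    congr 1
    · push_cast; ring
    · push_cast; ring
  · push_cast; ring

/-- Positive Random Features identity: `exp⟨q,k⟩` equals the expectation over a standard
Gaussian `ω ∼ N(0, I_d)` of `exp(⟨ω,q⟩ - ‖q‖²/2) * exp(⟨ω,k⟩ - ‖k‖²/2)`. -/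
theorem prf_identity (d : ℕ) (q k : EuclideanSpace ℝ (Fin d)) :
    Real.exp (inner ℝ q k : ℝ) =
      ∫ ω, Real.exp ((inner ℝ ω q : ℝ) - ‖q‖ ^ 2 / 2) *
        Real.exp ((inner ℝ ω k : ℝ) - ‖k‖ ^ 2 / 2) ∂(stdGaussian d) := by
  set f : EuclideanSpace ℝ (Fin d) → NNReal := fun w =>
      ⟨(2 * π) ^ (-(d : ℝ) / 2) * Real.exp (-‖w‖ ^ 2 / 2), by positivity⟩ with hf
  have hd : Measurable f := by
    apply Measurable.subtype_mk
    fun_prop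
  rw [stdGaussian]
  have key : (fun w => ENNReal.ofReal ((2 * π) ^ (-(d : ℝ) / 2) * Real.exp (-‖w‖ ^ 2 / 2)))
      = fun w : EuclideanSpace ℝ (Fin d) => ((f w : NNReal) : ENNReal) := by
    ext w
    rw [hf]
    exact ENNReal.ofReal_eq_coe_nnreal (by positivity)
  rw [key, integral_withDensity_eq_integral_smul hd]
  have hrw : ∀ w : EuclideanSpace ℝ (Fin d),
      (f w • (Real.exp ((inner ℝ w q : ℝ) - ‖q‖ ^ 2 / 2) *
          Real.exp ((inner ℝ w k : ℝ) - ‖k‖ ^ 2 / 2)) : ℝ)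
      = ((2 * π) ^ (-(d : ℝ) / 2) * Real.exp (-(‖q‖ ^ 2 / 2) - ‖k‖ ^ 2 / 2)) *
          Real.exp (-‖w‖ ^ 2 / 2 + (inner ℝ (q + k) w : ℝ)) := by
    intro w
    rw [NNReal.smul_def, smul_eq_mul, hf]
    simp only [NNReal.coe_mk]
    change (2 * π) ^ (-(d : ℝ) / 2) * Real.exp (-‖w‖ ^ 2 / 2) * _ = _
    rw [inner_add_left, real_inner_comm q w, real_inner_comm k w]
    simp only [mul_assoc, ← Real.exp_add]
    congr 2
    ring
  simp_rw [hrw]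
  rw [integral_const_mul, rexp_gaussian_mgf d (q + k)]
  rw [@norm_add_sq_real, mul_mul_mul_comm]
  rw [show ((2 * π) ^ (-(d : ℝ) / 2) * ((2 * π) ^ ((d : ℝ) / 2)) : ℝ)
      = 1 by
        rw [← Real.rpow_add (by positivity),
          show (-(d : ℝ) / 2 + (d : ℝ) / 2 : ℝ) = 0 by ring, Real.rpow_zero]]
  rw [one_mul, ← Real.exp_add]
  congr 1
  ring
end

section
/- For any kernel feature map φ : R^d → R^m and sequences q_1,…,q_n, k_1,…,k_n, v_1,…,v_n ∈ R^d, the linear attention output o_i = ∑_{j=1}^n (φ(q_i)φ(k_j)ᵀ / ∑_{j'=1}^n φ(q_i)φ(k_{j'})ᵀ) v_j can be computed for all i simultaneously as o_i = φ(q_i) A / (φ(q_i) b), where A = ∑_j φ(k_j)ᵀ v_j ∈ R^{m×d} and b = ∑_{j'} φ(k_{j'})ᵀ ∈ R^m; in particular each o_i equals the kernelized attention defined via pairwise sums, establishing that the n outputs require only O(nmd) arithmetic operations rather than O(n²d). -/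
open Finset

/-- Linear attention factorization: for a feature map `φ : ℝ^d → ℝ^m` and sequences of
queries, keys, and values, the kernelized attention output
`o_i = ∑_j (φ(q_i)φ(k_j)ᵀ / ∑_{j'} φ(q_i)φ(k_{j'})ᵀ) v_j` equals
`φ(q_i) A / (φ(q_i) b)` with the precomputed aggregates `A = ∑_j φ(k_j)ᵀ v_j` and
`b = ∑_{j'} φ(k_{j'})ᵀ`, shared across all queries. -/
theorem linear_attention_factorization (d m n : ℕ)
    (φ : EuclideanSpace ℝ (Fin d) → Fin m → ℝ)
    (q k v : Fin n → EuclideanSpace ℝ (Fin d))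
    (hpos : ∀ i : Fin n, 0 < ∑ j' : Fin n, ∑ l : Fin m, φ (q i) l * φ (k j') l) :
    ∀ i : Fin n,
      (∑ j : Fin n,
        ((∑ l : Fin m, φ (q i) l * φ (k j) l) /
          (∑ j' : Fin n, ∑ l : Fin m, φ (q i) l * φ (k j') l)) • v j) =
      (∑ l : Fin m, φ (q i) l * (∑ j' : Fin n, φ (k j') l))⁻¹ •
        ∑ l : Fin m, φ (q i) l • (∑ j : Fin n, φ (k j) l • v j) := by
  intro i
  have hD : (∑ l : Fin m, φ (q i) l * (∑ j' : Fin n, φ (k j') l)) =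
      ∑ j' : Fin n, ∑ l : Fin m, φ (q i) l * φ (k j') l := by
    rw [Finset.sum_comm]
    simp [Finset.mul_sum]
  have hA : (∑ l : Fin m, φ (q i) l • (∑ j : Fin n, φ (k j) l • v j)) =
      ∑ j : Fin n, (∑ l : Fin m, φ (q i) l * φ (k j) l) • v j := by
    simp only [Finset.smul_sum, Finset.sum_smul, smul_smul]
    rw [Finset.sum_comm]
  rw [hD, hA, Finset.smul_sum]
  refine Finset.sum_congr rfl fun j _ => ?_
  rw [smul_smul, div_eq_inv_mul]
end
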